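/- Every tangent vector to the root-type stratum {8} at the point v = (gx+hy)^8, namely every polynomial of the form 8(Gx+Hy)(gx+hy)^7, lies in the column space of the matrix J(v); explicitly, for v = (gx+hy)^8, columns 6 through 9 of J(v) (the λ, φ_{-2}, φ_0, φ_2 columns) each equal 8(Gx+Hy)(gx+hy)^7 for appropriate choices of (G,H), while columns 1–5 vanish. -/

import Mathlib

noncomputable section

variable {K : Type*} [CommRing K]

/-- The ω⁻⁴ column of J (common factor 9216 removed), from Appendix A. -/
def c0 (t : Fin 9 → K) : Fin 9 → K :=
  ![280*t 0*t 6 - 280*t 1*t 5,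
    -245*t 2*t 5 + 70*t 0*t 7 + 175*t 1*t 6,
    70*t 2*t 6 - 210*t 3*t 5 + 130*t 1*t 7 + 10*t 0*t 8,
    -175*t 4*t 5 - 35*t 3*t 6 + 35*t 1*t 8 + 175*t 2*t 7,
    84*t 2*t 8 + 196*t 3*t 7 - 140*t 5^2 - 140*t 4*t 6,
    -350*t 5*t 6 + 175*t 4*t 7 + 175*t 3*t 8,
    350*t 4*t 8 - 350*t 6^2,
    700*t 5*t 8 - 700*t 7*t 6,
    -1400*t 7^2 + 1400*t 8*t 6]

/-- The ω⁻² column of J (common factor 9216 removed). -/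
def c1 (t : Fin 9 → K) : Fin 9 → K :=
  ![-1400*t 0*t 5 + 1400*t 1*t 4,
    -385*t 0*t 6 - 840*t 1*t 5 + 1225*t 2*t 4,
    -280*t 2*t 5 + 1050*t 3*t 4 - 70*t 0*t 7 - 700*t 1*t 6,
    -910*t 2*t 6 + 280*t 3*t 5 + 875*t 4^2 - 240*t 1*t 7 - 5*t 0*t 8,
    1540*t 4*t 5 - 952*t 3*t 6 - 28*t 1*t 8 - 560*t 2*t 7,
    -105*t 2*t 8 - 1120*t 3*t 7 + 1400*t 5^2 - 175*t 4*t 6,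
    2100*t 5*t 6 - 1750*t 4*t 7 - 350*t 3*t 8,
    2450*t 6^2 - 1050*t 4*t 8 - 1400*t 5*t 7,
    -2800*t 5*t 8 + 2800*t 7*t 6]

/-- The ω⁰ column of J (common factor 9216 removed). -/
def c2 (t : Fin 9 → K) : Fin 9 → K :=
  ![-2800*t 1*t 3 + 2800*t 0*t 4,
    -2450*t 2*t 3 + 875*t 0*t 5 + 1575*t 1*t 4,
    210*t 0*t 6 - 2100*t 3^2 + 1540*t 1*t 5 + 350*t 2*t 4,
    1890*t 2*t 5 - 2625*t 3*t 4 + 35*t 0*t 7 + 700*t 1*t 6,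
    1568*t 2*t 6 + 336*t 3*t 5 - 2100*t 4^2 + 192*t 1*t 7 + 4*t 0*t 8,
    -2625*t 4*t 5 + 1890*t 3*t 6 + 35*t 1*t 8 + 700*t 2*t 7,
    210*t 2*t 8 + 1540*t 3*t 7 - 2100*t 5^2 + 350*t 4*t 6,
    -2450*t 5*t 6 + 1575*t 4*t 7 + 875*t 3*t 8,
    2800*t 4*t 8 - 2800*t 5*t 7]

/-- The ω² column of J (common factor 9216 removed). -/
def c3 (t : Fin 9 → K) : Fin 9 → K :=
  ![2800*t 2*t 1 - 2800*t 3*t 0,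
    -1400*t 1*t 3 - 1050*t 0*t 4 + 2450*t 2^2,
    2100*t 2*t 3 - 350*t 0*t 5 - 1750*t 1*t 4,
    -105*t 0*t 6 + 1400*t 3^2 - 1120*t 1*t 5 - 175*t 2*t 4,
    -952*t 2*t 5 + 1540*t 3*t 4 - 28*t 0*t 7 - 560*t 1*t 6,
    -910*t 2*t 6 + 280*t 3*t 5 + 875*t 4^2 - 240*t 1*t 7 - 5*t 0*t 8,
    1050*t 4*t 5 - 280*t 3*t 6 - 70*t 1*t 8 - 700*t 2*t 7,
    1225*t 4*t 6 - 385*t 2*t 8 - 840*t 3*t 7,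
    1400*t 4*t 7 - 1400*t 3*t 8]

/-- The ω⁴ column of J (common factor 9216 removed). -/
def c4 (t : Fin 9 → K) : Fin 9 → K :=
  ![1400*t 2*t 0 - 1400*t 1^2,
    -700*t 2*t 1 + 700*t 3*t 0,
    -350*t 2^2 + 350*t 0*t 4,
    -350*t 2*t 3 + 175*t 0*t 5 + 175*t 1*t 4,
    84*t 0*t 6 - 140*t 3^2 + 196*t 1*t 5 - 140*t 2*t 4,
    -35*t 2*t 5 - 175*t 3*t 4 + 35*t 0*t 7 + 175*t 1*t 6,
    70*t 2*t 6 - 210*t 3*t 5 + 130*t 1*t 7 + 10*t 0*t 8,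
    70*t 1*t 8 - 245*t 3*t 6 + 175*t 2*t 7,
    -280*t 3*t 7 + 280*t 2*t 8]

/-- The λ column of J. -/
def c5 (t : Fin 9 → K) : Fin 9 → K := t

/-- The φ₋₂ column of J. -/
def c6 (t : Fin 9 → K) : Fin 9 → K :=
  ![-16*t 1, -14*t 2, -12*t 3, -10*t 4, -8*t 5, -6*t 6, -4*t 7, -2*t 8, 0]

/-- The φ₀ column of J. -/
def c7 (t : Fin 9 → K) : Fin 9 → K :=
  ![16*t 0, 12*t 1, 8*t 2, 4*t 3, 0, -4*t 5, -8*t 6, -12*t 7, -16*t 8]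

/-- The φ₂ column of J. -/
def c8 (t : Fin 9 → K) : Fin 9 → K :=
  ![0, 2*t 0, 4*t 1, 6*t 2, 8*t 3, 10*t 4, 12*t 5, 14*t 6, 16*t 7]

/-- The 9×9 matrix J(T) from Appendix A of the paper (the factor 9216 = 2¹⁰3²
is restored on the five ω-columns). -/
def Jmat (t : Fin 9 → K) : Matrix (Fin 9) (Fin 9) K :=
  Matrix.of fun i j =>
    (![fun i' => (9216 : K) * c0 t i', fun i' => (9216 : K) * c1 t i',
       fun i' => (9216 : K) * c2 t i', fun i' => (9216 : K) * c3 t i',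
       fun i' => (9216 : K) * c4 t i',
       c5 t, c6 t, c7 t, c8 t] j) i

/-- The coefficient vector (binomial basis) of (gx+hy)⁸. -/
def pow8Vec (g h : ℝ) : Fin 9 → ℝ := fun k =>
  g ^ (8 - (k : ℕ)) * h ^ (k : ℕ)

/-- The coefficient vector (binomial basis) of 8(Gx+Hy)(gx+hy)⁷. -/
def tvec (g h G H : ℝ) : Fin 9 → ℝ := fun k =>
  (8 - (k : ℕ)) * G * g ^ (7 - (k : ℕ)) * h ^ (k : ℕ)
    + (k : ℕ) * H * g ^ (8 - (k : ℕ)) * h ^ ((k : ℕ) - 1)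

/-! At a pure power `v = (gx+hy)⁸` the five ω-columns, quadratic in `v`, vanish identically.
The λ-column is `v = 8((g/8)x + (h/8)y)(gx+hy)⁷` (Euler), and the three φ-columns are the
infinitesimal `sl₂`-action on `v`, which only moves the linear form `gx+hy`; so each of them is
`8(Gx+Hy)(gx+hy)⁷` with `(G, H)` equal to `(-2h, 0)`, `(2g, -2h)` and `(0, 2g)` respectively.
For `(g, h) ≠ 0` these three pairs span `ℝ²`, and `8(Gx+Hy)(gx+hy)⁷` is linear in `(G, H)`. -/

namespace Jmat

variable (g h : ℝ)

lemma pow8Vec_col_eq_zero {a : Fin 9} (ha : (a : ℕ) < 5) : (Jmat (pow8Vec g h)).col a = 0 := by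
  have hω : c0 (pow8Vec g h) = 0 ∧ c1 (pow8Vec g h) = 0 ∧ c2 (pow8Vec g h) = 0 ∧
      c3 (pow8Vec g h) = 0 ∧ c4 (pow8Vec g h) = 0 := by
    refine ⟨?_, ?_, ?_, ?_, ?_⟩ <;> funext k <;> fin_cases k <;>
      simp [c0, c1, c2, c3, c4, pow8Vec] <;> ring
  fin_cases a <;> (try simp at ha) <;> funext k <;> simp [Matrix.col, Jmat, hω]

lemma pow8Vec_col_five : (Jmat (pow8Vec g h)).col 5 = tvec g h (g / 8) (h / 8) := by
  funext k; fin_cases k <;> simp [Jmat, c5, pow8Vec, tvec] <;> ring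

lemma pow8Vec_col_six : (Jmat (pow8Vec g h)).col 6 = tvec g h (-2 * h) 0 := by
  funext k; fin_cases k <;> simp [Jmat, c6, pow8Vec, tvec] <;> ring

lemma pow8Vec_col_seven : (Jmat (pow8Vec g h)).col 7 = tvec g h (2 * g) (-2 * h) := by
  funext k; fin_cases k <;> simp [Jmat, c7, pow8Vec, tvec] <;> ring

lemma pow8Vec_col_eight : (Jmat (pow8Vec g h)).col 8 = tvec g h 0 (2 * g) := by
  funext k; fin_cases k <;> simp [Jmat, c8, pow8Vec, tvec] <;> ring

end Jmat

section tvec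

variable (g h : ℝ)

lemma tvec_add (G₁ H₁ G₂ H₂ : ℝ) :
    tvec g h G₁ H₁ + tvec g h G₂ H₂ = tvec g h (G₁ + G₂) (H₁ + H₂) := by
  funext k; simp only [Pi.add_apply, tvec]; ring

lemma tvec_smul (c G H : ℝ) : c • tvec g h G H = tvec g h (c * G) (c * H) := by
  funext k; simp only [Pi.smul_apply, smul_eq_mul, tvec]; ring

end tvec

lemma exists_sl2_coeffs {g h : ℝ} (hgh : ¬(g = 0 ∧ h = 0)) (G H : ℝ) :
    ∃ α β γ : ℝ, -2 * h * α + 2 * g * β = G ∧ -2 * h * β + 2 * g * γ = H := by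
  by_cases hg : g = 0
  · have hh : h ≠ 0 := fun hh => hgh ⟨hg, hh⟩
    refine ⟨-G / (2 * h), -H / (2 * h), 0, ?_, ?_⟩ <;> (subst hg; field_simp; ring)
  · refine ⟨0, G / (2 * g), (H + h * G / g) / (2 * g), ?_, ?_⟩ <;> (field_simp; ring)

/-- at v = (gx+hy)⁸, the first five (ω-)columns of J(v) vanish,
columns 6–9 (the λ, φ₋₂, φ₀, φ₂ columns) each equal 8(Gx+Hy)(gx+hy)⁷ for
appropriate (G,H), and every tangent vector 8(Gx+Hy)(gx+hy)⁷ to the root-type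
stratum {8} lies in the column space of J(v). -/
theorem tangent_space_in_column_space (g h : ℝ) (hgh : ¬(g = 0 ∧ h = 0)) :
    (∀ a : Fin 9, (a : ℕ) < 5 → ∀ i : Fin 9, Jmat (pow8Vec g h) i a = 0) ∧
    (∀ a : Fin 9, 5 ≤ (a : ℕ) →
      ∃ G H : ℝ, (fun i => Jmat (pow8Vec g h) i a) = tvec g h G H) ∧
    (∀ G H : ℝ, tvec g h G H ∈ LinearMap.range (Jmat (pow8Vec g h)).mulVecLin) := by
  refine ⟨fun a ha i => congrFun (Jmat.pow8Vec_col_eq_zero g h ha) i, fun a ha => ?_, fun G H => ?_⟩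
  · fin_cases a <;> (try simp at ha)
    exacts [⟨_, _, Jmat.pow8Vec_col_five g h⟩, ⟨_, _, Jmat.pow8Vec_col_six g h⟩,
      ⟨_, _, Jmat.pow8Vec_col_seven g h⟩, ⟨_, _, Jmat.pow8Vec_col_eight g h⟩]
  · obtain ⟨α, β, γ, rfl, rfl⟩ := exists_sl2_coeffs hgh G H
    have hcomb : tvec g h (-2 * h * α + 2 * g * β) (-2 * h * β + 2 * g * γ) =
        α • (Jmat (pow8Vec g h)).col 6 + β • (Jmat (pow8Vec g h)).col 7 +
          γ • (Jmat (pow8Vec g h)).col 8 := by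
      simp only [Jmat.pow8Vec_col_six, Jmat.pow8Vec_col_seven, Jmat.pow8Vec_col_eight,
        tvec_smul, tvec_add]
      congr 1 <;> ring
    rw [Matrix.range_mulVecLin, hcomb]
    refine add_mem (add_mem ?_ ?_) ?_ <;>
      exact Submodule.smul_mem _ _ (Submodule.subset_span ⟨_, rfl⟩)
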